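/- arXiv:1110.2047 — 4 statements merged into one kernel-verified Lean document; each statement's English description precedes it below -/
import Mathlib

section
/- Suppose β = a (so β^b = a^b) and k ≥ 1. For all integers j ≥ 1 and n ≥ k: ∑_{m=0}^{j} C(j,m)·(−1)^{j−m}·Y_{n,a}(m;k,a,b) = (k!·(j−1)!/(2^{k−1}·a^b))·C(n,k)·S(n−k, j−1), where Y_{n,a}(m;k,a,b) denotes the evaluation of the polynomial Y_{n,a}(x;k,a,b) at x = m. -/
open Polynomial

/-- The exponential generating series `e^{xt} = ∑_{n≥0} xⁿ tⁿ/n!` as a formal power series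
in `t` with coefficients in `ℂ[x]`. -/
noncomputable def expX : PowerSeries (Polynomial ℂ) :=
  PowerSeries.mk fun n => (n.factorial : ℂ)⁻¹ • (Polynomial.X : Polynomial ℂ) ^ n

/-- The exponential generating series `∑_{n≥0} Y_n tⁿ/n!` of a family of polynomials. -/
noncomputable def egf (Y : ℕ → Polynomial ℂ) : PowerSeries (Polynomial ℂ) :=
  PowerSeries.mk fun n => (n.factorial : ℂ)⁻¹ • Y n

/-- The defining identity for the unified Apostol-type polynomials with general constants:
`(B·e^t − A)^v · ∑_{n≥0} Y_n tⁿ/n! = (2^{1−k} t^k)^v · e^{xt}` as formal power series in `t`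
over `ℂ[x]`. -/
def ApostolFamilyC (k v : ℕ) (B A : ℂ) (Y : ℕ → Polynomial ℂ) : Prop :=
  (PowerSeries.C (R := Polynomial ℂ) (Polynomial.C B) * PowerSeries.exp (Polynomial ℂ)
      - PowerSeries.C (R := Polynomial ℂ) (Polynomial.C A)) ^ v * egf Y
    = (PowerSeries.C (R := Polynomial ℂ) (Polynomial.C ((2 : ℂ) ^ ((1 : ℤ) - (k : ℤ)))) *
        PowerSeries.X ^ k) ^ v * expX

/-- `Y` is the family of unified Apostol-type polynomials `Y_{n,β}^{(v)}(x;k,a,b)`: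
here `β^b = exp(b·Log β)` is the principal complex power and `a^b` the real power. -/
def ApostolFamily (k v : ℕ) (a b : ℝ) (β : ℂ) (Y : ℕ → Polynomial ℂ) : Prop :=
  ApostolFamilyC k v (β ^ (b : ℂ)) (((a ^ b : ℝ) : ℂ)) Y

/-- The Stirling numbers of the second kind, characterized by
`l!·S(p,l) = ∑_{i=0}^{l} (−1)^{l−i}·C(l,i)·i^p`. -/
noncomputable def stirling2 (p l : ℕ) : ℂ :=
  (l.factorial : ℂ)⁻¹ *
    ∑ i ∈ Finset.range (l + 1), (-1 : ℂ) ^ (l - i) * (l.choose i : ℂ) * (i : ℂ) ^ p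


/-!
Evaluate the defining identity at `x = m`, so that `e^{xt}` becomes `e^{mt}`, and take the
`j`-th finite difference in `m`: the right side becomes `2^{1-k} t^k (e^t - 1)^j`. Since `β = a`,
the left factor is `a^b (e^t - 1)`, which cancels one factor `e^t - 1`. The coefficient of `tⁿ`
in `t^k (e^t - 1)^{j-1}` is `(j-1)! S(n-k, j-1) / (n-k)!` by the binomial expansion of
`(e^t - 1)^{j-1}` and the explicit formula for `S`.
-/

namespace PowerSeries

section ExpSeries

variable {R : Type*} [CommRing R] [Algebra ℚ R]

theorem exp_sub_one_ne_zero [Nontrivial R] : exp R - 1 ≠ 0 := fun h => by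
  simpa [coeff_exp] using congrArg (coeff 1) h

theorem exp_sub_one_pow (l : ℕ) :
    (exp R - 1) ^ l = ∑ i ∈ Finset.range (l + 1),
      C ((l.choose i : R) * (-1) ^ (l - i)) * rescale (i : R) (exp R) := by
  rw [sub_eq_add_neg, add_pow]
  refine Finset.sum_congr rfl fun i _ => ?_
  rw [← exp_pow_eq_rescale_exp, map_mul, map_pow, map_neg, map_one, map_natCast]
  ring

end ExpSeries

theorem coeff_exp_sub_one_pow (p l : ℕ) :
    coeff p ((exp ℂ - 1) ^ l) = l.factorial * stirling2 p l / p.factorial := by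
  simp only [exp_sub_one_pow, map_sum, coeff_C_mul, coeff_rescale, coeff_exp, map_div₀, map_one,
    map_natCast, stirling2, Finset.mul_sum, Finset.sum_div]
  refine Finset.sum_congr rfl fun i _ => ?_
  field_simp [Nat.factorial_ne_zero]

theorem map_evalRingHom_expX (z : ℂ) :
    map (Polynomial.evalRingHom z) expX = rescale z (exp ℂ) := by
  ext n
  simp [expX, coeff_exp, div_eq_inv_mul, mul_comm]

theorem coeff_map_evalRingHom_egf (Y : ℕ → ℂ[X]) (z : ℂ) (n : ℕ) :
    coeff n (map (Polynomial.evalRingHom z) (egf Y)) = (Y n).eval z / n.factorial := by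
  simp [egf, div_eq_inv_mul]

variable {k : ℕ} {A : ℂ} {Y : ℕ → ℂ[X]}

theorem _root_.ApostolFamilyC.eval_eq (hY : ApostolFamilyC k 1 A A Y) (z : ℂ) :
    C A * (exp ℂ - 1) * map (Polynomial.evalRingHom z) (egf Y)
      = C ((2 : ℂ) ^ ((1 : ℤ) - k)) * X ^ k * rescale z (exp ℂ) := by
  have h := congrArg (map (Polynomial.evalRingHom z)) hY
  simp only [pow_one, map_mul, map_sub, map_C, map_pow, map_X, map_exp,
    map_evalRingHom_expX, Polynomial.coe_evalRingHom, Polynomial.eval_C] at h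
  rw [← h]
  ring

theorem _root_.ApostolFamilyC.fwdDiff_egf_eq (hY : ApostolFamilyC k 1 A A Y) (l : ℕ) :
    C A * ∑ m ∈ Finset.range (l + 2),
        C (((l + 1).choose m : ℂ) * (-1) ^ (l + 1 - m)) *
          map (Polynomial.evalRingHom (m : ℂ)) (egf Y)
      = C ((2 : ℂ) ^ ((1 : ℤ) - k)) * (X ^ k * (exp ℂ - 1) ^ l) := by
  refine mul_left_cancel₀ exp_sub_one_ne_zero ?_
  calc (exp ℂ - 1) * (C A * ∑ m ∈ Finset.range (l + 2),
        C (((l + 1).choose m : ℂ) * (-1) ^ (l + 1 - m)) *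
          map (Polynomial.evalRingHom (m : ℂ)) (egf Y))
      = ∑ m ∈ Finset.range (l + 2), C (((l + 1).choose m : ℂ) * (-1) ^ (l + 1 - m)) *
          (C A * (exp ℂ - 1) * map (Polynomial.evalRingHom (m : ℂ)) (egf Y)) := by
        rw [Finset.mul_sum, Finset.mul_sum]
        exact Finset.sum_congr rfl fun m _ => by ring
    _ = C ((2 : ℂ) ^ ((1 : ℤ) - k)) * X ^ k * (exp ℂ - 1) ^ (l + 1) := by
        simp only [hY.eval_eq, exp_sub_one_pow (l + 1), Finset.mul_sum]
        exact Finset.sum_congr rfl fun m _ => by ring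
    _ = (exp ℂ - 1) * (C ((2 : ℂ) ^ ((1 : ℤ) - k)) * (X ^ k * (exp ℂ - 1) ^ l)) := by ring

end PowerSeries

theorem two_zpow_one_sub {k : ℕ} (hk : 1 ≤ k) :
    (2 : ℂ) ^ ((1 : ℤ) - k) = ((2 : ℂ) ^ (k - 1))⁻¹ := by
  rw [← zpow_natCast, ← zpow_neg, Nat.cast_sub hk]
  ring_nf

theorem apostol_pairing_formula_beta_eq_a_general (k : ℕ) (a b : ℝ)
    (ha : 0 < a) (hk : 1 ≤ k)
    (Y : ℕ → Polynomial ℂ) (hY : ApostolFamily k 1 a b (a : ℂ) Y)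
    (j n : ℕ) (hj : 1 ≤ j) (hn : k ≤ n) :
    ∑ m ∈ Finset.range (j + 1),
        (j.choose m : ℂ) * (-1 : ℂ) ^ (j - m) * (Y n).eval (m : ℂ)
      = (k.factorial : ℂ) * ((j - 1).factorial : ℂ) /
          ((2 : ℂ) ^ (k - 1) * ((a ^ b : ℝ) : ℂ)) *
          (n.choose k : ℂ) * stirling2 (n - k) (j - 1) := by
  obtain ⟨l, rfl⟩ : ∃ l, j = l + 1 := ⟨j - 1, by omega⟩
  rw [ApostolFamily, ← Complex.ofReal_cpow ha.le] at hY
  have h := congrArg (PowerSeries.coeff n) (hY.fwdDiff_egf_eq l)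
  simp only [map_sum, PowerSeries.coeff_C_mul, PowerSeries.coeff_map_evalRingHom_egf,
    mul_div_assoc', ← Finset.sum_div, PowerSeries.coeff_X_pow_mul', if_pos hn,
    PowerSeries.coeff_exp_sub_one_pow, two_zpow_one_sub hk] at h
  have hfact : (n.choose k : ℂ) * k.factorial * (n - k).factorial = n.factorial := by
    exact_mod_cast Nat.choose_mul_factorial_mul_factorial hn
  have hA : ((a ^ b : ℝ) : ℂ) ≠ 0 := Complex.ofReal_ne_zero.2 (Real.rpow_pos_of_pos ha b).ne'
  rw [← hfact] at h
  rw [Nat.add_sub_cancel]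
  field_simp [Nat.factorial_ne_zero, (Nat.choose_pos hn).ne'] at h ⊢
  linear_combination h

/-- For `β = a`, `k ≥ 1`, `j ≥ 1` and `n ≥ k`:
`∑_{m=0}^{j} C(j,m)(−1)^{j−m} Y_{n,a}(m;k,a,b)
  = (k!(j−1)!/(2^{k−1} a^b)) C(n,k) S(n−k, j−1)`. -/
theorem apostol_pairing_formula_beta_eq_a (k : ℕ) (a b : ℝ)
    (ha : 0 < a) (hb : 0 < b) (hk : 1 ≤ k)
    (Y : ℕ → Polynomial ℂ) (hY : ApostolFamily k 1 a b (a : ℂ) Y)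
    (j n : ℕ) (hj : 1 ≤ j) (hn : k ≤ n) :
    ∑ m ∈ Finset.range (j + 1),
        (j.choose m : ℂ) * (-1 : ℂ) ^ (j - m) * (Y n).eval (m : ℂ)
      = (k.factorial : ℂ) * ((j - 1).factorial : ℂ) /
          ((2 : ℂ) ^ (k - 1) * ((a ^ b : ℝ) : ℂ)) *
          (n.choose k : ℂ) * stirling2 (n - k) (j - 1) :=
  apostol_pairing_formula_beta_eq_a_general k a b ha hk Y hY j n hj hn
end

section
/- For all integers v ≥ 1 and n ≥ k, the following identity of polynomials in x holds: β^b·Y_{n,β}^{(v)}(x+1;k,a,b) − a^b·Y_{n,β}^{(v)}(x;k,a,b) = 2^{1−k}·(n)_k·Y_{n−k,β}^{(v−1)}(x;k,a,b) (this is the action of the operator β^b·e^t − a^b on Y_{n,β}^{(v)}). -/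
open Polynomial

/-!
Write `S = β^b e^t − a^b` and `G = 2^{1−k} t^k`, and let `F_v` be the generating series of
`Y^{(v)}`. The defining identities `S^v F_v = G^v e^{xt}` and `S^{v−1} F_{v−1} = G^{v−1} e^{xt}`
give `S F_v = G F_{v−1}` after cancelling `S^{v−1}` in the domain `ℂ[x][[t]]`; it is nonzero
because `G^v e^{xt}` is. The substitution
`x ↦ x + 1` fixes `S` and `G` and turns `e^{xt}` into `e^t e^{xt}`, so it also turns `F_v` into
`e^t F_v`. Hence `S F_v = β^b F_v(x + 1) − a^b F_v(x)`, and comparing the coefficients of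
`tⁿ/n!` on both sides of `S F_v = G F_{v−1}` gives the identity.
-/

section CancelPowers

variable {M : Type*} [CommMonoidWithZero M] [IsCancelMulZero M]

theorem mul_eq_mul_of_pow_succ_mul_eq {s g f f' e : M} {w : ℕ}
    (h : s ^ (w + 1) * f = g ^ (w + 1) * e) (h' : s ^ w * f' = g ^ w * e)
    (hne : g ^ (w + 1) * e ≠ 0) : s * f = g * f' := by
  have hs : s ^ w ≠ 0 := fun hs => hne (by rw [← h, pow_succ, hs, zero_mul, zero_mul])
  refine mul_left_cancel₀ hs ?_
  calc s ^ w * (s * f)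
      _ = g * (g ^ w * e) := by rw [← mul_assoc, ← pow_succ, h, pow_succ', mul_assoc]
      _ = s ^ w * (g * f') := by rw [← h', mul_left_comm]

theorem map_eq_mul_of_pow_mul_eq {F : Type*} [FunLike F M M] [MonoidHomClass F M M] (ψ : F)
    {s g f e u : M} {v : ℕ} (h : s ^ v * f = g ^ v * e) (hne : g ^ v * e ≠ 0)
    (hs : ψ s = s) (hg : ψ g = g) (he : ψ e = u * e) : ψ f = u * f := by
  have hsv : s ^ v ≠ 0 := fun hsv => hne (by rw [← h, hsv, zero_mul])
  refine mul_left_cancel₀ hsv ?_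
  calc s ^ v * ψ f
      _ = ψ (s ^ v * f) := by rw [map_mul, map_pow, hs]
      _ = u * (g ^ v * e) := by rw [h, map_mul, map_pow, hg, he, mul_left_comm]
      _ = s ^ v * (u * f) := by rw [← h, mul_left_comm]

end CancelPowers

theorem expX_eq_rescale_exp : expX = PowerSeries.rescale X (PowerSeries.exp ℂ[X]) := by
  ext n
  simp [expX, PowerSeries.coeff_rescale, Polynomial.smul_eq_C_mul, X_pow_mul]

theorem expX_ne_zero : expX ≠ 0 := fun h => by
  simpa [expX] using congrArg (PowerSeries.coeff 0) h

theorem map_compRingHom_expX (q : ℂ[X]) :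
    PowerSeries.map (compRingHom q) expX = PowerSeries.rescale q (PowerSeries.exp ℂ[X]) := by
  rw [expX_eq_rescale_exp, ← PowerSeries.rescale_map, PowerSeries.map_exp]
  simp

theorem map_compRingHom_X_add_one_expX :
    PowerSeries.map (compRingHom (X + 1)) expX = PowerSeries.exp ℂ[X] * expX := by
  rw [map_compRingHom_expX, add_comm, ← PowerSeries.exp_mul_exp_eq_exp_add,
    PowerSeries.rescale_one, expX_eq_rescale_exp]
  rfl

theorem map_compRingHom_egf (q : ℂ[X]) (Y : ℕ → ℂ[X]) :
    PowerSeries.map (compRingHom q) (egf Y) = egf fun n => (Y n).comp q := by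
  ext n
  simp [egf, Polynomial.smul_comp]

theorem coeff_egf (Y : ℕ → ℂ[X]) (n : ℕ) :
    PowerSeries.coeff n (egf Y) = (n.factorial : ℂ)⁻¹ • Y n :=
  PowerSeries.coeff_mk _ _

theorem coeff_X_pow_mul_egf (Y : ℕ → ℂ[X]) {k n : ℕ} (hn : k ≤ n) :
    PowerSeries.coeff n (PowerSeries.X ^ k * egf Y) =
      (n.factorial : ℂ)⁻¹ • ((n.descFactorial k : ℂ) • Y (n - k)) := by
  rw [PowerSeries.coeff_X_pow_mul', if_pos hn, coeff_egf, smul_smul,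
    ← Nat.factorial_mul_descFactorial hn]
  have hd : (n.descFactorial k : ℂ) ≠ 0 := by
    simpa using Nat.descFactorial_eq_zero_iff_lt.not.2 (not_lt.2 hn)
  push_cast
  rw [mul_inv, mul_assoc, inv_mul_cancel₀ hd, mul_one]

noncomputable def apostolOp (B A : ℂ) : PowerSeries ℂ[X] :=
  PowerSeries.C (Polynomial.C B) * PowerSeries.exp ℂ[X] - PowerSeries.C (Polynomial.C A)

noncomputable def apostolKernel (k : ℕ) : PowerSeries ℂ[X] :=
  PowerSeries.C (Polynomial.C ((2 : ℂ) ^ ((1 : ℤ) - (k : ℤ)))) * PowerSeries.X ^ k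

theorem map_compRingHom_apostolOp (q : ℂ[X]) (B A : ℂ) :
    PowerSeries.map (compRingHom q) (apostolOp B A) = apostolOp B A := by
  simp [apostolOp]

theorem map_compRingHom_apostolKernel (q : ℂ[X]) (k : ℕ) :
    PowerSeries.map (compRingHom q) (apostolKernel k) = apostolKernel k := by
  simp [apostolKernel]

theorem apostolKernel_pow_mul_expX_ne_zero (k v : ℕ) : apostolKernel k ^ v * expX ≠ 0 := by
  refine mul_ne_zero (pow_ne_zero _ (mul_ne_zero ?_ (pow_ne_zero _ PowerSeries.X_ne_zero)))
    expX_ne_zero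
  rw [Ne, PowerSeries.C_injective.eq_iff' (map_zero _), C_eq_zero]
  exact zpow_ne_zero _ two_ne_zero

namespace ApostolFamilyC

variable {k w : ℕ} {B A : ℂ} {Y Y' : ℕ → ℂ[X]}

theorem map_compRingHom_X_add_one_egf {v : ℕ} (hY : ApostolFamilyC k v B A Y) :
    PowerSeries.map (compRingHom (X + 1)) (egf Y) = PowerSeries.exp ℂ[X] * egf Y :=
  map_eq_mul_of_pow_mul_eq _ hY (apostolKernel_pow_mul_expX_ne_zero k v)
    (map_compRingHom_apostolOp _ B A) (map_compRingHom_apostolKernel _ k)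
    map_compRingHom_X_add_one_expX

theorem apostolOp_mul_egf (hY : ApostolFamilyC k (w + 1) B A Y)
    (hY' : ApostolFamilyC k w B A Y') : apostolOp B A * egf Y = apostolKernel k * egf Y' :=
  mul_eq_mul_of_pow_succ_mul_eq hY hY' (apostolKernel_pow_mul_expX_ne_zero k (w + 1))

theorem operator_identity (hY : ApostolFamilyC k (w + 1) B A Y)
    (hY' : ApostolFamilyC k w B A Y') {n : ℕ} (hn : k ≤ n) :
    C B * (Y n).comp (X + 1) - C A * Y n =
      C ((2 : ℂ) ^ ((1 : ℤ) - (k : ℤ)) * (n.descFactorial k : ℂ)) * Y' (n - k) := by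
  have hseries : PowerSeries.C (C B) * egf (fun m => (Y m).comp (X + 1)) -
      PowerSeries.C (C A) * egf Y = apostolKernel k * egf Y' := by
    rw [← map_compRingHom_egf, hY.map_compRingHom_X_add_one_egf, ← hY.apostolOp_mul_egf hY',
      apostolOp]
    ring
  have hcoeff := congrArg (PowerSeries.coeff n) hseries
  rw [apostolKernel, mul_assoc, map_sub, PowerSeries.coeff_C_mul, PowerSeries.coeff_C_mul,
    PowerSeries.coeff_C_mul, coeff_egf, coeff_egf, coeff_X_pow_mul_egf _ hn] at hcoeff
  refine smul_right_injective ℂ[X]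
    (inv_ne_zero (Nat.cast_ne_zero.2 n.factorial_ne_zero : (n.factorial : ℂ) ≠ 0)) ?_
  simpa [mul_smul_comm, smul_sub, C_mul, Polynomial.smul_eq_C_mul, mul_assoc, mul_left_comm]
    using hcoeff

end ApostolFamilyC

theorem apostol_operator_identity_general (k v : ℕ) (a b : ℝ) (β : ℂ)
    (hv : 1 ≤ v)
    (Y Y' : ℕ → Polynomial ℂ)
    (hY : ApostolFamily k v a b β Y) (hY' : ApostolFamily k (v - 1) a b β Y')
    (n : ℕ) (hn : k ≤ n) :
    Polynomial.C (β ^ (b : ℂ)) * (Y n).comp (Polynomial.X + 1)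
        - Polynomial.C (((a ^ b : ℝ) : ℂ)) * Y n
      = Polynomial.C ((2 : ℂ) ^ ((1 : ℤ) - (k : ℤ)) * (n.descFactorial k : ℂ)) *
          Y' (n - k) := by
  obtain ⟨w, rfl⟩ := Nat.exists_eq_add_of_le' hv
  exact ApostolFamilyC.operator_identity hY (by rwa [Nat.add_sub_cancel] at hY') hn

/-- Action of the operator `β^b e^t − a^b`: for `v ≥ 1` and `n ≥ k`,
`β^b·Y_{n,β}^{(v)}(x+1;k,a,b) − a^b·Y_{n,β}^{(v)}(x;k,a,b)
  = 2^{1−k}·(n)_k·Y_{n−k,β}^{(v−1)}(x;k,a,b)`. -/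
theorem apostol_operator_identity (k v : ℕ) (a b : ℝ) (β : ℂ)
    (ha : 0 < a) (hb : 0 < b) (hβ : β ≠ 0) (hv : 1 ≤ v)
    (Y Y' : ℕ → Polynomial ℂ)
    (hY : ApostolFamily k v a b β Y) (hY' : ApostolFamily k (v - 1) a b β Y')
    (n : ℕ) (hn : k ≤ n) :
    Polynomial.C (β ^ (b : ℂ)) * (Y n).comp (Polynomial.X + 1)
        - Polynomial.C (((a ^ b : ℝ) : ℂ)) * Y n
      = Polynomial.C ((2 : ℂ) ^ ((1 : ℤ) - (k : ℤ)) * (n.descFactorial k : ℂ)) *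
          Y' (n - k) :=
  apostol_operator_identity_general k v a b β hv Y Y' hY hY' n hn
end

section
/- (Raabe-type multiplication formula, higher order.) Let m ≥ 1 be an integer and v ≥ 1. For every n ≥ 0 and every real x: Y_{n,β}^{(v)}(mx;k,a,b) = m^{n−kv}·a^{bv(m−1)}·∑ over all tuples (u_1,…,u_{m−1}) of nonnegative integers with u_1+⋯+u_{m−1} ≤ v of (v!/(u_1!⋯u_{m−1}!·(v−u_1−⋯−u_{m−1})!))·(β^b/a^b)^{j}·Ỹ_{n}^{(v)}(x + j/m), where j = u_1 + 2u_2 + ⋯ + (m−1)u_{m−1}, m^{n−kv} := m^n/m^{kv}, and (Ỹ_n^{(v)})_{n≥0} is the family of polynomials attached to the parameters (β^m, a^m), i.e., the polynomials satisfying ((β^b)^m·e^t − (a^b)^m)^v·∑_{n≥0} Ỹ_n^{(v)}(x)·tⁿ/n! = (2^{1−k}·t^k)^v·e^{xt} as formal power series in t. -/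
open Polynomial

/-! With `B = β^b`, `A = a^b` and `z = (B/A)·e^t` one has `B·e^t - A = A·(z - 1)` and
`B^m·e^{mt} - A^m = A^m·(z - 1)·(1 + z + ⋯ + z^{m-1})`. Expanding `(1 + z + ⋯ + z^{m-1})^v`
by the multinomial theorem and using `z^j·e^{mxt} = (B/A)^j·e^{(x + j/m)·mt}`, the two defining
identities show that `(B^m·e^{mt} - A^m)^v` times `m^{kv}` times the generating function of
`Y_n(mx)` equals `(B^m·e^{mt} - A^m)^v` times the combination of the generating functions of
`Ỹ_n(x + j/m)`, evaluated at `mt`. The common factor is a nonzero power series, so it cancels,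
and comparing coefficients of `tⁿ` gives the formula. -/

open Finset

def boundedTuples (r v : ℕ) : Finset (Fin r → ℕ) :=
  (Fintype.piFinset fun _ : Fin r => range (v + 1)).filter fun u => ∑ i, u i ≤ v

def tupleWeight {r : ℕ} (u : Fin r → ℕ) : ℕ := ∑ i, (i.val + 1) * u i

def tupleMultinomial (v : ℕ) {r : ℕ} (u : Fin r → ℕ) : ℕ :=
  Nat.multinomial univ (Fin.cons (v - ∑ i, u i) u : Fin (r + 1) → ℕ)

theorem mem_boundedTuples {r v : ℕ} {u : Fin r → ℕ} :
    u ∈ boundedTuples r v ↔ ∑ i, u i ≤ v := by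
  simp only [boundedTuples, mem_filter, Fintype.mem_piFinset, mem_range, and_iff_right_iff_imp]
  exact fun h i =>
    Nat.lt_succ_of_le ((single_le_sum (fun j _ => Nat.zero_le (u j)) (mem_univ i)).trans h)

theorem tupleMultinomial_eq_div {K : Type*} [Field K] [CharZero K] {r v : ℕ} {u : Fin r → ℕ}
    (hu : ∑ i, u i ≤ v) :
    (tupleMultinomial v u : K)
      = v.factorial / (((∏ i, (u i).factorial) * (v - ∑ i, u i).factorial : ℕ) : K) := by
  have hspec := Nat.multinomial_spec univ (Fin.cons (v - ∑ i, u i) u : Fin (r + 1) → ℕ)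
  simp only [Fin.prod_univ_succ, Fin.sum_univ_succ, Fin.cons_zero, Fin.cons_succ,
    Nat.sub_add_cancel hu] at hspec
  rw [eq_div_iff (Nat.cast_ne_zero.mpr (by positivity)), ← Nat.cast_mul, ← hspec,
    tupleMultinomial]
  congr 1
  ring

theorem one_add_sum_pow {R : Type*} [CommSemiring R] {r : ℕ} (y : Fin r → R) (v : ℕ) :
    (1 + ∑ i, y i) ^ v
      = ∑ u ∈ boundedTuples r v, (tupleMultinomial v u : R) * ∏ i, y i ^ u i := by
  have hcons : 1 + ∑ i, y i = ∑ i, (Fin.cons 1 y : Fin (r + 1) → R) i := by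
    simp [Fin.sum_univ_succ]
  rw [hcons, sum_pow_eq_sum_piAntidiag]
  symm
  refine sum_nbij' (fun u => Fin.cons (v - ∑ i, u i) u) Fin.tail ?_ ?_ ?_ ?_ ?_
  · intro u hu
    simp only [mem_boundedTuples] at hu
    simp [Fin.sum_univ_succ]
    omega
  · intro w hw
    simp only [mem_piAntidiag, Fin.sum_univ_succ] at hw
    simp only [mem_boundedTuples, Fin.tail]
    omega
  · intro u _
    simp
  · intro w hw
    simp only [mem_piAntidiag, Fin.sum_univ_succ] at hw
    rw [← Fin.cons_self_tail w]
    congr 1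
    simp [Fin.tail]
    omega
  · intro u _
    simp [tupleMultinomial, Fin.prod_univ_succ]

theorem pow_sub_one_pow_eq_mul_sum {R : Type*} [CommRing R] (z : R) {m : ℕ} (hm : m ≠ 0)
    (v : ℕ) :
    (z ^ m - 1) ^ v = (z - 1) ^ v *
      ∑ u ∈ boundedTuples (m - 1) v, (tupleMultinomial v u : R) * z ^ tupleWeight u := by
  obtain ⟨r, rfl⟩ : ∃ r, m = r + 1 := Nat.exists_eq_succ_of_ne_zero hm
  have hgeom : ∑ j ∈ range (r + 1), z ^ j = 1 + ∑ i : Fin r, z ^ (i.val + 1) := by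
    rw [sum_range_succ', Fin.sum_univ_eq_sum_range (fun i => z ^ (i + 1)), pow_zero, add_comm]
  rw [← geom_sum_mul, mul_pow, mul_comm, hgeom, one_add_sum_pow]
  simp only [Nat.add_one_sub_one, tupleWeight, ← pow_mul, prod_pow_eq_pow_sum]

namespace PowerSeries

theorem rescale_C {R : Type*} [CommSemiring R] (a c : R) : rescale a (C c) = C c := by
  ext n
  rcases n with _ | n <;> simp [coeff_C]

theorem rescale_C_mul_X_pow_pow_mul {R : Type*} [CommRing R] (a c : R) (k v : ℕ) (f : R⟦X⟧) :
    rescale a ((C c * X ^ k) ^ v * f) = C (a ^ (k * v)) * ((C c * X ^ k) ^ v * rescale a f) := by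
  simp only [map_mul, map_pow, rescale_C, rescale_X]
  ring

section Field

variable {K : Type*} [Field K] [CharZero K]

theorem C_mul_exp_sub_C_ne_zero {A : K} (hA : A ≠ 0) (B : K) : C B * exp K - C A ≠ 0 := by
  intro h
  have h₀ := congrArg (coeff 0) h
  have h₁ := congrArg (coeff 1) h
  simp [coeff_exp] at h₀ h₁
  exact hA (by simpa [h₁] using h₀)

theorem rescale_pow_mul_exp_sub_pow_pow {A : K} (hA : A ≠ 0) (B : K) {m : ℕ} (hm : m ≠ 0)
    (v : ℕ) :
    rescale (m : K) (C (B ^ m) * exp K - C (A ^ m)) ^ v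
      = C (A ^ (v * (m - 1))) * (C B * exp K - C A) ^ v * ∑ u ∈ boundedTuples (m - 1) v,
          C (tupleMultinomial v u * (B / A) ^ tupleWeight u) *
            rescale (tupleWeight u : K) (exp K) := by
  have hz : ∀ j : ℕ, (C (B / A) * exp K) ^ j = C ((B / A) ^ j) * rescale (j : K) (exp K) := by
    intro j
    rw [mul_pow, map_pow, exp_pow_eq_rescale_exp]
  have hfactor : C B * exp K - C A = C A * (C (B / A) * exp K - 1) := by
    rw [mul_sub, ← mul_assoc, ← map_mul, mul_div_cancel₀ _ hA, mul_one]
  have hfactor_m : rescale (m : K) (C (B ^ m) * exp K - C (A ^ m))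
      = C (A ^ m) * ((C (B / A) * exp K) ^ m - 1) := by
    rw [hz, map_sub, map_mul, rescale_C, rescale_C, mul_sub, ← mul_assoc, ← map_mul,
      ← mul_pow, mul_div_cancel₀ _ hA, mul_one]
  rw [hfactor_m, hfactor, mul_pow (C (A ^ m)), mul_pow (C A), pow_sub_one_pow_eq_mul_sum _ hm]
  simp only [hz, map_mul, map_natCast]
  obtain ⟨r, rfl⟩ : ∃ r, m = r + 1 := Nat.exists_eq_succ_of_ne_zero hm
  simp only [Nat.add_one_sub_one, map_pow, ← pow_mul, mul_assoc]
  ring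

theorem C_pow_mul_eq_sum_rescale {A B c x : K} (hA : A ≠ 0) {k v m : ℕ} (hm : m ≠ 0)
    {F : K⟦X⟧} {G : K → K⟦X⟧}
    (hF : (C B * exp K - C A) ^ v * F = (C c * X ^ k) ^ v * rescale ((m : K) * x) (exp K))
    (hG : ∀ q, (C (B ^ m) * exp K - C (A ^ m)) ^ v * G q
      = (C c * X ^ k) ^ v * rescale q (exp K)) :
    C ((m : K) ^ (k * v)) * F = C (A ^ (v * (m - 1))) * ∑ u ∈ boundedTuples (m - 1) v,
      C (tupleMultinomial v u * (B / A) ^ tupleWeight u) *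
        rescale (m : K) (G (x + tupleWeight u / m)) := by
  have hm' : (m : K) ≠ 0 := Nat.cast_ne_zero.mpr hm
  set D : K⟦X⟧ := rescale (m : K) (C (B ^ m) * exp K - C (A ^ m))
  have hD : D ≠ 0 := fun h => C_mul_exp_sub_C_ne_zero (pow_ne_zero m hA) (B ^ m)
    (rescale_injective hm' (h.trans (map_zero _).symm))
  have hDG : ∀ q, D ^ v * rescale (m : K) (G q)
      = C ((m : K) ^ (k * v)) * ((C c * X ^ k) ^ v * rescale (m * q) (exp K)) := by
    intro q
    rw [← map_pow, ← map_mul, hG, rescale_C_mul_X_pow_pow_mul, rescale_rescale, mul_comm q]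
  refine mul_left_cancel₀ (pow_ne_zero v hD) ?_
  calc D ^ v * (C ((m : K) ^ (k * v)) * F)
      = C (A ^ (v * (m - 1))) * (∑ u ∈ boundedTuples (m - 1) v,
          C (tupleMultinomial v u * (B / A) ^ tupleWeight u) *
            rescale (tupleWeight u : K) (exp K)) *
          C ((m : K) ^ (k * v)) * ((C B * exp K - C A) ^ v * F) := by
        rw [show D ^ v = _ from rescale_pow_mul_exp_sub_pow_pow hA B hm v]
        ring
    _ = C (A ^ (v * (m - 1))) * ∑ u ∈ boundedTuples (m - 1) v,
          C (tupleMultinomial v u * (B / A) ^ tupleWeight u) *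
            (D ^ v * rescale (m : K) (G (x + tupleWeight u / m))) := by
        rw [hF, mul_assoc, mul_assoc, sum_mul]
        congr 1
        refine sum_congr rfl fun u _ => ?_
        rw [hDG, mul_add, mul_div_cancel₀ _ hm', ← exp_mul_exp_eq_exp_add]
        ring
    _ = D ^ v * (C (A ^ (v * (m - 1))) * ∑ u ∈ boundedTuples (m - 1) v,
          C (tupleMultinomial v u * (B / A) ^ tupleWeight u) *
            rescale (m : K) (G (x + tupleWeight u / m))) := by
        simp only [mul_sum]
        refine sum_congr rfl fun u _ => ?_
        ring

end Field

end PowerSeries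

theorem coeff_map_eval_egf (p : ℂ) (Z : ℕ → Polynomial ℂ) (n : ℕ) :
    PowerSeries.coeff n (PowerSeries.map (Polynomial.evalRingHom p) (egf Z))
      = (n.factorial : ℂ)⁻¹ * (Z n).eval p := by
  simp [PowerSeries.coeff_map, egf]

theorem map_eval_expX (p : ℂ) :
    PowerSeries.map (Polynomial.evalRingHom p) expX
      = PowerSeries.rescale p (PowerSeries.exp ℂ) := by
  ext n
  simp [PowerSeries.coeff_map, expX, PowerSeries.coeff_exp, mul_comm]

theorem ApostolFamilyC.map_eval {k v : ℕ} {B A : ℂ} {Z : ℕ → Polynomial ℂ}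
    (hZ : ApostolFamilyC k v B A Z) (p : ℂ) :
    (PowerSeries.C B * PowerSeries.exp ℂ - PowerSeries.C A) ^ v *
        PowerSeries.map (Polynomial.evalRingHom p) (egf Z)
      = (PowerSeries.C ((2 : ℂ) ^ ((1 : ℤ) - (k : ℤ))) * PowerSeries.X ^ k) ^ v *
        PowerSeries.rescale p (PowerSeries.exp ℂ) := by
  simpa [PowerSeries.map_C, PowerSeries.map_exp, map_eval_expX] using
    congrArg (PowerSeries.map (Polynomial.evalRingHom p)) hZ

theorem apostol_multiplication_higher_general (k v : ℕ) (a b : ℝ) (β : ℂ)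
    (ha : 0 < a)
    (m : ℕ) (hm : 1 ≤ m)
    (Y Yt : ℕ → Polynomial ℂ)
    (hY : ApostolFamily k v a b β Y)
    (hYt : ApostolFamilyC k v ((β ^ (b : ℂ)) ^ m) ((((a ^ b : ℝ) : ℂ)) ^ m) Yt)
    (n : ℕ) (x : ℝ) :
    (Y n).eval ((m : ℂ) * (x : ℂ))
      = (m : ℂ) ^ n / (m : ℂ) ^ (k * v) * ((a ^ b : ℝ) : ℂ) ^ (v * (m - 1)) *
          ∑ u ∈ (Fintype.piFinset fun _ : Fin (m - 1) => Finset.range (v + 1)).filter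
              (fun u => ∑ i, u i ≤ v),
            (v.factorial : ℂ) /
                ((((∏ i, (u i).factorial) * (v - ∑ i, u i).factorial : ℕ)) : ℂ) *
              (β ^ (b : ℂ) / ((a ^ b : ℝ) : ℂ)) ^ (∑ i, (i.val + 1) * u i) *
              (Yt n).eval ((x : ℂ) + ((∑ i, (i.val + 1) * u i : ℕ) : ℂ) / (m : ℂ)) := by
  change _ = _ * ∑ u ∈ boundedTuples (m - 1) v, _ * _ ^ tupleWeight u *
    (Yt n).eval ((x : ℂ) + (tupleWeight u : ℂ) / m)
  have hA : ((a ^ b : ℝ) : ℂ) ≠ 0 := by exact_mod_cast (Real.rpow_pos_of_pos ha b).ne'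
  have hm₀ : m ≠ 0 := Nat.one_le_iff_ne_zero.mp hm
  have hseries := PowerSeries.C_pow_mul_eq_sum_rescale hA hm₀ (hY.map_eval (m * x)) hYt.map_eval
  have hcoeff := congrArg (PowerSeries.coeff n) hseries
  simp only [PowerSeries.coeff_C_mul, map_sum, PowerSeries.coeff_rescale, coeff_map_eval_egf]
    at hcoeff
  have hfac : (n.factorial : ℂ) ≠ 0 := Nat.cast_ne_zero.mpr n.factorial_ne_zero
  have hY_eq : (Y n).eval ((m : ℂ) * x) = ((m : ℂ) ^ (k * v))⁻¹ * n.factorial *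
      ((m : ℂ) ^ (k * v) * ((n.factorial : ℂ)⁻¹ * (Y n).eval ((m : ℂ) * x))) := by
    field_simp
  rw [hY_eq, hcoeff]
  simp only [Finset.mul_sum]
  refine Finset.sum_congr rfl fun u hu => ?_
  rw [← tupleMultinomial_eq_div (mem_boundedTuples.mp hu)]
  field_simp

/-- Raabe-type multiplication formula for the higher-order unified Apostol-type polynomials:
`Y_{n,β}^{(v)}(mx) = m^{n−kv} a^{bv(m−1)} ∑_{u₁,…,u_{m−1}≥0, u₁+⋯+u_{m−1}≤v}
  (v!/(u₁!⋯u_{m−1}!(v−u₁−⋯−u_{m−1})!)) (β^b/a^b)^j Ỹ_n^{(v)}(x + j/m)`,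
where `j = u₁ + 2u₂ + ⋯ + (m−1)u_{m−1}` and `Ỹ` is the family for the parameters
`((β^b)^m, (a^b)^m)`. -/
theorem apostol_multiplication_higher (k v : ℕ) (a b : ℝ) (β : ℂ)
    (ha : 0 < a) (hb : 0 < b) (hβ : β ≠ 0)
    (m : ℕ) (hm : 1 ≤ m) (hv : 1 ≤ v)
    (Y Yt : ℕ → Polynomial ℂ)
    (hY : ApostolFamily k v a b β Y)
    (hYt : ApostolFamilyC k v ((β ^ (b : ℂ)) ^ m) ((((a ^ b : ℝ) : ℂ)) ^ m) Yt)
    (n : ℕ) (x : ℝ) :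
    (Y n).eval ((m : ℂ) * (x : ℂ))
      = (m : ℂ) ^ n / (m : ℂ) ^ (k * v) * ((a ^ b : ℝ) : ℂ) ^ (v * (m - 1)) *
          ∑ u ∈ (Fintype.piFinset fun _ : Fin (m - 1) => Finset.range (v + 1)).filter
              (fun u => ∑ i, u i ≤ v),
            (v.factorial : ℂ) /
                ((((∏ i, (u i).factorial) * (v - ∑ i, u i).factorial : ℕ)) : ℂ) *
              (β ^ (b : ℂ) / ((a ^ b : ℝ) : ℂ)) ^ (∑ i, (i.val + 1) * u i) *
              (Yt n).eval ((x : ℂ) + ((∑ i, (i.val + 1) * u i : ℕ) : ℂ) / (m : ℂ)) :=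
  apostol_multiplication_higher_general k v a b β ha m hm Y Yt hY hYt n x
end

section
/- For all integers v ≥ 1 and n ≥ kv, the following identity of polynomials in x holds: Y_{n,β}^{(v)}(x;k,a,b) = (−1)^v·((n)_{kv}/(2^{kv}·a^{bv}))·ℰ_{n−kv}^{(v)}(x, −β^b/a^b), where ℰ^{(v)} denotes the Apostol–Euler polynomials of order v (the paper writes the prefactor as −1, which agrees with (−1)^v when v is odd). -/
open Polynomial

/-- The defining identity for the Apostol–Euler polynomials of order `v`:
`(λ·e^t + 1)^v · ∑_{n≥0} ℰ_n^{(v)}(x,λ) tⁿ/n! = 2^v·e^{xt}`. -/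
def ApostolEulerFamily (v : ℕ) (lam : ℂ) (E : ℕ → Polynomial ℂ) : Prop :=
  (PowerSeries.C (R := Polynomial ℂ) (Polynomial.C lam) * PowerSeries.exp (Polynomial ℂ) + 1) ^ v *
      egf E
    = PowerSeries.C (R := Polynomial ℂ) (Polynomial.C ((2 : ℂ) ^ v)) * expX

theorem mul_eq_mul_of_mul_eq_mul_of_ne_zero {M : Type*} [CommMonoidWithZero M] [IsCancelMulZero M]
    {p f g h u w : M} (hp : p ≠ 0) (hf : p * f = u * g) (hh : p * h = w * g) : w * f = u * h :=
  mul_left_cancel₀ hp <| by rw [mul_left_comm, hf, mul_left_comm, ← hh, mul_left_comm]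

theorem PowerSeries.C_mul_exp_add_one_ne_zero {R : Type*} [CommRing R] [Algebra ℚ R]
    [Nontrivial R] (l : R) : PowerSeries.C l * PowerSeries.exp R + 1 ≠ 0 := by
  intro h
  have hl : l = 0 := by simpa [PowerSeries.coeff_exp] using congrArg (PowerSeries.coeff 1) h
  have hl₁ : l + 1 = 0 := by simpa [PowerSeries.coeff_exp] using congrArg (PowerSeries.coeff 0) h
  simp [hl] at hl₁

theorem zpow_one_sub_natCast_pow {K : Type*} [CommGroupWithZero K] {x : K} (hx : x ≠ 0)
    (k v : ℕ) : (x ^ ((1 : ℤ) - k)) ^ v = x ^ v / x ^ (k * v) := by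
  rw [← zpow_natCast, ← zpow_mul, sub_mul, one_mul, zpow_sub₀ hx, ← Nat.cast_mul, zpow_natCast,
    zpow_natCast]

theorem C_C_mul_egf (c : ℂ) (Y : ℕ → ℂ[X]) :
    PowerSeries.C (C c) * egf Y = egf fun n => c • Y n := by
  ext1 n
  rw [PowerSeries.coeff_C_mul, coeff_egf, coeff_egf, ← smul_eq_C_mul, smul_comm]

theorem X_pow_mul_egf (j : ℕ) (Y : ℕ → ℂ[X]) :
    PowerSeries.X ^ j * egf Y = egf fun n => (n.descFactorial j : ℂ) • Y (n - j) := by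
  ext1 n
  rw [PowerSeries.coeff_X_pow_mul', coeff_egf, coeff_egf, smul_smul]
  split_ifs with hj
  · have hd : (n.descFactorial j : ℂ) ≠ 0 := by exact_mod_cast (Nat.descFactorial_pos.mpr hj).ne'
    rw [← Nat.factorial_mul_descFactorial hj, Nat.cast_mul, mul_inv, mul_assoc,
      inv_mul_cancel₀ hd, mul_one]
  · simp [Nat.descFactorial_eq_zero_iff_lt.mpr (not_le.mp hj)]

theorem egf_injective : Function.Injective egf := by
  intro Y Z h
  funext n
  have hn := congrArg (PowerSeries.coeff n) h
  have hn! : (n.factorial : ℂ)⁻¹ ≠ 0 := inv_ne_zero (by exact_mod_cast n.factorial_ne_zero)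
  rwa [coeff_egf, coeff_egf, smul_right_inj hn!] at hn

theorem ApostolFamilyC.smul_eq_smul_apostolEuler {k v : ℕ} {B A : ℂ} {Y E : ℕ → ℂ[X]}
    (hA : A ≠ 0) (hY : ApostolFamilyC k v B A Y) (hE : ApostolEulerFamily v (-(B / A)) E)
    (n : ℕ) : (2 ^ v * (-A) ^ v) • Y n =
      (((2 : ℂ) ^ ((1 : ℤ) - k)) ^ v * n.descFactorial (k * v)) • E (n - k * v) := by
  rw [ApostolEulerFamily] at hE
  set P := PowerSeries.C (C (-(B / A))) * PowerSeries.exp ℂ[X] + 1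
  have hP : P ^ v ≠ 0 := pow_ne_zero v (PowerSeries.C_mul_exp_add_one_ne_zero _)
  have hfac : PowerSeries.C (C B) * PowerSeries.exp ℂ[X] - PowerSeries.C (C A) =
      PowerSeries.C (C (-A)) * P := by
    rw [mul_add, ← mul_assoc, ← map_mul, ← map_mul, neg_mul_neg, mul_div_cancel₀ B hA, mul_one,
      map_neg, map_neg, sub_eq_add_neg]
  clear_value P
  replace hY : P ^ v * (PowerSeries.C (C ((-A) ^ v)) * egf Y) =
      PowerSeries.C (C (((2 : ℂ) ^ ((1 : ℤ) - k)) ^ v)) * PowerSeries.X ^ (k * v) * expX := by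
    rw [ApostolFamilyC, hfac] at hY
    simp only [map_pow, pow_mul]
    linear_combination hY
  have hegf := mul_eq_mul_of_mul_eq_mul_of_ne_zero hP hY hE
  rw [mul_assoc, X_pow_mul_egf, C_C_mul_egf, C_C_mul_egf, C_C_mul_egf] at hegf
  simpa only [smul_smul] using congrFun (egf_injective hegf) n

theorem apostol_eq_apostolEuler_general (k v : ℕ) (a b : ℝ) (β : ℂ)
    (ha : 0 < a)
    (Y E : ℕ → Polynomial ℂ)
    (hY : ApostolFamily k v a b β Y)
    (hE : ApostolEulerFamily v (-(β ^ (b : ℂ) / ((a ^ b : ℝ) : ℂ))) E)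
    (n : ℕ) :
    Y n = Polynomial.C ((-1 : ℂ) ^ v * (n.descFactorial (k * v) : ℂ) /
        ((2 : ℂ) ^ (k * v) * ((a ^ b : ℝ) : ℂ) ^ v)) * E (n - k * v) := by
  have hA : ((a ^ b : ℝ) : ℂ) ≠ 0 := by exact_mod_cast (Real.rpow_pos_of_pos ha b).ne'
  have h := ApostolFamilyC.smul_eq_smul_apostolEuler hA hY hE n
  rw [zpow_one_sub_natCast_pow two_ne_zero, ← eq_inv_smul_iff₀ (by simp [hA])] at h
  rw [← smul_eq_C_mul, h, smul_smul]
  congr 1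
  rw [neg_pow]
  field_simp
  rw [← pow_mul, pow_mul', neg_one_sq, one_pow, one_mul]

/-- For `v ≥ 1` and `n ≥ kv`:
`Y_{n,β}^{(v)}(x;k,a,b) = (−1)^v ((n)_{kv}/(2^{kv} a^{bv})) ℰ_{n−kv}^{(v)}(x, −β^b/a^b)`. -/
theorem apostol_eq_apostolEuler (k v : ℕ) (a b : ℝ) (β : ℂ)
    (ha : 0 < a) (hb : 0 < b) (hβ : β ≠ 0) (hv : 1 ≤ v)
    (Y E : ℕ → Polynomial ℂ)
    (hY : ApostolFamily k v a b β Y)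
    (hE : ApostolEulerFamily v (-(β ^ (b : ℂ) / ((a ^ b : ℝ) : ℂ))) E)
    (n : ℕ) (hn : k * v ≤ n) :
    Y n = Polynomial.C ((-1 : ℂ) ^ v * (n.descFactorial (k * v) : ℂ) /
        ((2 : ℂ) ^ (k * v) * ((a ^ b : ℝ) : ℂ) ^ v)) * E (n - k * v) :=
  apostol_eq_apostolEuler_general k v a b β ha Y E hY hE n
end
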